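/- arXiv:2603.27395 — 4 statements merged into one kernel-verified Lean document; each statement's English description precedes it below -/
import Mathlib

section
/- Let μ > 0, ω ∈ ℝ, and let γ : ℝ → ℝ × ℝ be a solution of the Hopf normal form system with γ(0) ≠ (0,0). Then ‖γ(t)‖² → μ as t → +∞; that is, for μ > 0 every nonzero trajectory converges to the limit cycle of radius √μ created by the Hopf bifurcation. -/
open Filter Topology

/-- The Hopf normal form vector field with parameters `μ`, `ω`. -/
def hopfVF (μ ω : ℝ) (p : ℝ × ℝ) : ℝ × ℝ :=
  (μ * p.1 - ω * p.2 - p.1 * (p.1 ^ 2 + p.2 ^ 2),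
   ω * p.1 + μ * p.2 - p.2 * (p.1 ^ 2 + p.2 ^ 2))

/-!
The rotation term of the Hopf field is tangent to circles, so `R = x² + y²` satisfies the
logistic equation `R' = 2 R (μ - R)`. Along any solution of `R' = c R (μ - R)` the quantity
`W = (R - μ) (R₀ e^{cμt} + μ - R₀) + μ (μ - R₀)` obeys the linear equation `W' = c (μ - R) W`
and vanishes at `0`, so Grönwall forces `W ≡ 0` for `t ≥ 0`. This is the explicit solution
`R = μ - μ (μ - R₀) / (R₀ e^{cμt} + μ - R₀)`, which tends to `μ` when `R₀ > 0` and `cμ > 0`.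
-/

theorem eq_zero_of_hasDerivAt_smul_self {E : Type*} [NormedAddCommGroup E] [NormedSpace ℝ E]
    {a : ℝ → ℝ} {W : ℝ → E} (ha : Continuous a) (hW : ∀ t, HasDerivAt W (a t • W t) t)
    {t₀ t : ℝ} (h₀ : W t₀ = 0) (ht : t₀ ≤ t) : W t = 0 := by
  obtain ⟨K, hK⟩ := isCompact_Icc.exists_bound_of_continuousOn
    (ha.continuousOn (s := Set.Icc t₀ t))
  refine eq_zero_of_abs_deriv_le_mul_abs_self_of_eq_zero_right (K := K)
    (fun s _ => (hW s).continuousAt.continuousWithinAt) (fun s _ => (hW s).hasDerivWithinAt)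
    h₀ (fun s hs => ?_) t ⟨ht, le_rfl⟩
  rw [norm_smul]
  exact mul_le_mul_of_nonneg_right (hK s (Set.Ico_subset_Icc_self hs)) (norm_nonneg _)

section Logistic

variable {c μ : ℝ} {R : ℝ → ℝ}

theorem logistic_sub_mul_eq (hR : ∀ t, HasDerivAt R (c * R t * (μ - R t)) t) {t : ℝ}
    (ht : 0 ≤ t) :
    (R t - μ) * (R 0 * Real.exp (c * μ * t) + (μ - R 0)) = -(μ * (μ - R 0)) := by
  set A := R 0
  let D : ℝ → ℝ := fun s => A * Real.exp (c * μ * s) + (μ - A)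
  have hD : ∀ s, HasDerivAt D (c * μ * (D s - (μ - A))) s := fun s => by
    refine ((((hasDerivAt_id s).const_mul (c * μ)).exp.const_mul A).add_const
      (μ - A)).congr_deriv ?_
    simp only [D, id, mul_one]
    ring
  have hW : ∀ s, HasDerivAt (fun s => (R s - μ) * D s + μ * (μ - A))
      ((c * (μ - R s)) • ((R s - μ) * D s + μ * (μ - A))) s := fun s => by
    refine ((((hR s).sub_const μ).mul (hD s)).add_const (μ * (μ - A))).congr_deriv ?_
    rw [smul_eq_mul]
    ring
  have hRc : Continuous R := continuous_iff_continuousAt.2 fun s => (hR s).continuousAt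
  have hW₀ : (R 0 - μ) * D 0 + μ * (μ - A) = 0 := by
    simp only [D, mul_zero, Real.exp_zero]
    ring
  linarith [eq_zero_of_hasDerivAt_smul_self (continuous_const.mul (continuous_const.sub hRc))
    hW hW₀ ht]

theorem tendsto_nhds_of_hasDerivAt_logistic (hc : 0 < c) (hμ : 0 < μ)
    (hR : ∀ t, HasDerivAt R (c * R t * (μ - R t)) t) (h₀ : 0 < R 0) :
    Tendsto R atTop (𝓝 μ) := by
  have hD : Tendsto (fun t => R 0 * Real.exp (c * μ * t) + (μ - R 0)) atTop atTop :=
    tendsto_atTop_add_const_right _ _ <| (Real.tendsto_exp_atTop.comp <|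
      tendsto_id.const_mul_atTop (mul_pos hc hμ)).const_mul_atTop h₀
  have hlim : Tendsto (fun t => μ - μ * (μ - R 0) / (R 0 * Real.exp (c * μ * t) + (μ - R 0)))
      atTop (𝓝 μ) := by
    simpa using tendsto_const_nhds.sub (tendsto_const_nhds.div_atTop hD)
  refine hlim.congr' ?_
  filter_upwards [eventually_ge_atTop 0, hD.eventually_gt_atTop 0] with t ht hpos
  rw [sub_eq_iff_eq_add, ← sub_eq_iff_eq_add', eq_div_iff hpos.ne']
  linarith [logistic_sub_mul_eq hR ht]

end Logistic

theorem hasDerivAt_normSq_of_hasDerivAt_hopfVF {μ ω t : ℝ} {γ : ℝ → ℝ × ℝ}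
    (hγ : HasDerivAt γ (hopfVF μ ω (γ t)) t) :
    HasDerivAt (fun t => (γ t).1 ^ 2 + (γ t).2 ^ 2)
      (2 * ((γ t).1 ^ 2 + (γ t).2 ^ 2) * (μ - ((γ t).1 ^ 2 + (γ t).2 ^ 2))) t := by
  have hx : HasDerivAt (fun t => (γ t).1) (hopfVF μ ω (γ t)).1 t := by
    simpa using hγ.hasFDerivAt.fst.hasDerivAt
  have hy : HasDerivAt (fun t => (γ t).2) (hopfVF μ ω (γ t)).2 t := by
    simpa using hγ.hasFDerivAt.snd.hasDerivAt
  refine ((hx.fun_pow 2).add (hy.fun_pow 2)).congr_deriv ?_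
  simp only [hopfVF]
  ring

theorem hopf_convergence_to_limit_cycle (μ ω : ℝ) (hμ : 0 < μ)
    (γ : ℝ → ℝ × ℝ) (hγ : ∀ t : ℝ, HasDerivAt γ (hopfVF μ ω (γ t)) t)
    (h0 : γ 0 ≠ ((0 : ℝ), (0 : ℝ))) :
    Tendsto (fun t => (γ t).1 ^ 2 + (γ t).2 ^ 2) atTop (𝓝 μ) := by
  refine tendsto_nhds_of_hasDerivAt_logistic two_pos hμ
    (fun t => hasDerivAt_normSq_of_hasDerivAt_hopfVF (hγ t)) ?_
  have : (γ 0).1 ≠ 0 ∨ (γ 0).2 ≠ 0 := by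
    contrapose! h0
    exact Prod.ext h0.1 h0.2
  rcases this with h | h <;> positivity
end

section
/- Let c ∈ ℝ with sin(c) ≠ 0, and define F : ℝ → ℝ² by F(θ) = (cos θ, cos(θ − c)). Then F is injective modulo 2π: for all s, t ∈ [0, 2π), F(s) = F(t) implies s = t. That is, the two-dimensional delay map restricted to one period of the circular limit cycle is injective whenever the delay is generic (sin(ωτ) ≠ 0). -/
open Real

theorem delay_map_injective_on_period (c : ℝ) (hc : sin c ≠ 0) :
    ∀ s t : ℝ, s ∈ Set.Ico 0 (2 * π) → t ∈ Set.Ico 0 (2 * π) →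
      (cos s, cos (s - c)) = (cos t, cos (t - c)) → s = t := by
  intro s t hs ht h
  obtain ⟨h1, h2⟩ := Prod.mk.injEq .. ▸ h
  rw [Real.cos_sub, Real.cos_sub, h1] at h2
  have hsin : sin s = sin t := by
    have := mul_right_cancel₀ hc (by linarith : sin s * sin c = sin t * sin c)
    exact this
  have hang : (s : Real.Angle) = (t : Real.Angle) :=
    Real.Angle.cos_sin_inj (by simpa using h1) (by simpa using hsin)
  rw [Real.Angle.angle_eq_iff_two_pi_dvd_sub] at hang
  obtain ⟨k, hk⟩ := hang
  have hπ := Real.pi_pos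
  have hk0 : k = 0 := by
    rcases hs with ⟨hs0, hs1⟩
    rcases ht with ⟨ht0, ht1⟩
    by_contra hne
    have h1k : (1 : ℝ) ≤ |(k : ℝ)| := by
      exact_mod_cast Int.one_le_abs (by exact_mod_cast hne)
    have : |s - t| < 2 * π := abs_sub_lt_iff.2 ⟨by linarith, by linarith⟩
    rw [hk] at this
    rw [abs_mul, abs_of_pos (by linarith : (0:ℝ) < 2 * π)] at this
    nlinarith
  rw [hk0] at hk
  simp at hk
  linarith
end

section
/- Let c ∈ ℝ with sin(c) ≠ 0, and define F : ℝ → ℝ² by F(θ) = (cos θ, cos(θ − c)). Then the image F(ℝ) = {(cos θ, cos(θ − c)) : θ ∈ ℝ}, equipped with the subspace topology of ℝ², is homeomorphic to the unit circle {z ∈ ℂ : |z| = 1}. In particular, the delay embedding of a circular limit cycle with a generic delay is a topological circle, whose first homology group is isomorphic to ℤ. -/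
open Real

/-! Since `cos (θ - c) = re (e^{-ic} e^{iθ})`, the curve is the image of the unit circle under the
`ℝ`-linear map `z ↦ (re z, re (e^{-ic} z))` of `ℂ ≅ ℝ²`, whose kernel is trivial as soon as
`im e^{-ic} = -sin c ≠ 0`. A linear automorphism of a finite-dimensional space is a homeomorphism. -/

namespace Complex

theorem range_exp_ofReal_mul_I : Set.range (fun θ : ℝ => exp (θ * I)) = {z : ℂ | ‖z‖ = 1} := by
  ext z
  refine ⟨?_, fun hz => ⟨arg z, ?_⟩⟩
  · rintro ⟨θ, rfl⟩
    exact norm_exp_ofReal_mul_I θ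
  · simpa [Set.mem_ofPred_eq.mp hz] using norm_mul_exp_arg_mul_I z

def reProdReMul (w : ℂ) : ℂ →ₗ[ℝ] ℝ × ℝ :=
  reLm.prod (reLm ∘ₗ LinearMap.mulLeft ℝ w)

theorem reProdReMul_apply (w z : ℂ) : reProdReMul w z = (z.re, (w * z).re) := rfl

theorem reProdReMul_injective {w : ℂ} (hw : w.im ≠ 0) : Function.Injective (reProdReMul w) := by
  rw [← LinearMap.ker_eq_bot, LinearMap.ker_eq_bot']
  intro z hz
  obtain ⟨hre, hmul⟩ : z.re = 0 ∧ (w * z).re = 0 := by simpa [reProdReMul_apply] using hz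
  have him : z.im = 0 := by simpa [hre, hw] using hmul
  exact Complex.ext hre him

noncomputable def reProdReMulEquiv {w : ℂ} (hw : w.im ≠ 0) : ℂ ≃L[ℝ] ℝ × ℝ :=
  ((reProdReMul w).linearEquivOfInjective (reProdReMul_injective hw)
    (by simp)).toContinuousLinearEquiv

theorem reProdReMulEquiv_apply {w : ℂ} (hw : w.im ≠ 0) (z : ℂ) :
    reProdReMulEquiv hw z = reProdReMul w z := rfl

theorem reProdReMul_exp_neg_mul_I (c θ : ℝ) :
    reProdReMul (exp (-(c * I))) (exp (θ * I)) = (Real.cos θ, Real.cos (θ - c)) := by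
  rw [reProdReMul_apply, ← exp_add, ← neg_mul, ← add_mul, ← ofReal_neg, ← ofReal_add,
    exp_ofReal_mul_I_re, exp_ofReal_mul_I_re, neg_add_eq_sub]

theorem im_exp_neg_mul_I (c : ℝ) : (exp (-(c * I))).im = -Real.sin c := by
  rw [← neg_mul, ← ofReal_neg, exp_ofReal_mul_I_im, Real.sin_neg]

end Complex

theorem delay_embedding_of_cycle_is_topological_circle (c : ℝ) (hc : sin c ≠ 0) :
    Nonempty
      ((Set.range (fun θ : ℝ => ((cos θ, cos (θ - c)) : ℝ × ℝ))) ≃ₜ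
        ({z : ℂ | ‖z‖ = 1})) := by
  have hw : (Complex.exp (-(c * Complex.I))).im ≠ 0 := by
    rwa [Complex.im_exp_neg_mul_I, neg_ne_zero]
  let L := Complex.reProdReMulEquiv hw
  have hrange : Set.range (fun θ : ℝ => ((cos θ, cos (θ - c)) : ℝ × ℝ)) =
      L '' {z : ℂ | ‖z‖ = 1} := by
    rw [← Complex.range_exp_ofReal_mul_I, ← Set.range_comp]
    simp only [Function.comp_def, L, Complex.reProdReMulEquiv_apply,
      Complex.reProdReMul_exp_neg_mul_I]
  rw [hrange]
  exact ⟨(L.toHomeomorph.image _).symm⟩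
end

section
/- Let σ, β > 0 with σ > β + 1, set ρ_c = σ(σ + β + 3)/(σ − β − 1) and ω = √(β(σ + ρ_c)). Then the complex number iω is a root of the polynomial X³ + (σ + β + 1)X² + β(σ + ρ_c)X + 2σβ(ρ_c − 1), i.e., the characteristic polynomial of the Jacobian of the Lorenz system at the nontrivial equilibria C± has a purely imaginary pair of roots ±iω at ρ = ρ_c. Moreover, ρ_c is the unique ρ ∈ ℝ for which (σ + β + 1)·β(σ + ρ) = 2σβ(ρ − 1), i.e., the unique parameter value at which this crossing occurs. -/
/-! At ρ = ρ_c the Hurwitz determinant a₂a₁ - a₀ of X³ + a₂X² + a₁X + a₀ vanishes, so the cubic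
factors as (X² + a₁)(X + a₂) and has the roots ±i√a₁. The vanishing condition is linear in ρ
with leading coefficient -β(σ - β - 1), which gives uniqueness of ρ_c. -/

theorem cubic_eq_zero_of_sq_eq_neg {R : Type*} [CommRing R] {a b c z : R}
    (habc : a * b = c) (hz : z ^ 2 = -b) : z ^ 3 + a * z ^ 2 + b * z + c = 0 := by
  linear_combination (z + a) * hz - habc

theorem lorenz_hurwitz_eq_iff {σ β : ℝ} (ρ : ℝ) (hβ : β ≠ 0) (hden : σ - β - 1 ≠ 0) :
    (σ + β + 1) * (β * (σ + ρ)) = 2 * σ * β * (ρ - 1) ↔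
      ρ = σ * (σ + β + 3) / (σ - β - 1) := by
  have hdiff : (σ + β + 1) * (β * (σ + ρ)) - 2 * σ * β * (ρ - 1)
      = β * (σ * (σ + β + 3) - ρ * (σ - β - 1)) := by ring
  rw [eq_div_iff hden, ← sub_eq_zero, hdiff, mul_eq_zero, or_iff_right hβ, sub_eq_zero, eq_comm]

theorem lorenz_hopf_critical_parameter_general (σ β : ℝ) (hβ : 0 < β)
    (h : β + 1 < σ) :
    let ρc : ℝ := σ * (σ + β + 3) / (σ - β - 1)
    let ω : ℝ := Real.sqrt (β * (σ + ρc))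
    ((Complex.I * ω) ^ 3 + ((σ : ℂ) + β + 1) * (Complex.I * ω) ^ 2 +
        (β * (σ + ρc) : ℝ) * (Complex.I * ω) + (2 * σ * β * (ρc - 1) : ℝ) = 0) ∧
    ((-(Complex.I * ω)) ^ 3 + ((σ : ℂ) + β + 1) * (-(Complex.I * ω)) ^ 2 +
        (β * (σ + ρc) : ℝ) * (-(Complex.I * ω)) + (2 * σ * β * (ρc - 1) : ℝ) = 0) ∧
    (∀ ρ : ℝ, (σ + β + 1) * (β * (σ + ρ)) = 2 * σ * β * (ρ - 1) ↔ ρ = ρc) := by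
  intro ρc ω
  have hden : 0 < σ - β - 1 := by linarith
  have hcrit : ∀ ρ : ℝ, (σ + β + 1) * (β * (σ + ρ)) = 2 * σ * β * (ρ - 1) ↔ ρ = ρc :=
    fun ρ ↦ lorenz_hurwitz_eq_iff ρ hβ.ne' hden.ne'
  have hρc : 0 < ρc := div_pos (by nlinarith) hden
  have hω : (Complex.I * ω) ^ 2 = -((β * (σ + ρc) : ℝ) : ℂ) := by
    rw [mul_pow, Complex.I_sq, ← Complex.ofReal_pow, Real.sq_sqrt (by nlinarith), neg_one_mul]
  have hcritC :
      ((σ : ℂ) + β + 1) * ((β * (σ + ρc) : ℝ) : ℂ) = ((2 * σ * β * (ρc - 1) : ℝ) : ℂ) := by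
    exact_mod_cast (hcrit ρc).2 rfl
  exact ⟨cubic_eq_zero_of_sq_eq_neg hcritC hω,
    cubic_eq_zero_of_sq_eq_neg hcritC (by rw [neg_sq, hω]), hcrit⟩

theorem lorenz_hopf_critical_parameter (σ β : ℝ) (hσ : 0 < σ) (hβ : 0 < β)
    (h : β + 1 < σ) :
    let ρc : ℝ := σ * (σ + β + 3) / (σ - β - 1)
    let ω : ℝ := Real.sqrt (β * (σ + ρc))
    ((Complex.I * ω) ^ 3 + ((σ : ℂ) + β + 1) * (Complex.I * ω) ^ 2 +
        (β * (σ + ρc) : ℝ) * (Complex.I * ω) + (2 * σ * β * (ρc - 1) : ℝ) = 0) ∧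
    ((-(Complex.I * ω)) ^ 3 + ((σ : ℂ) + β + 1) * (-(Complex.I * ω)) ^ 2 +
        (β * (σ + ρc) : ℝ) * (-(Complex.I * ω)) + (2 * σ * β * (ρc - 1) : ℝ) = 0) ∧
    (∀ ρ : ℝ, (σ + β + 1) * (β * (σ + ρ)) = 2 * σ * β * (ρ - 1) ↔ ρ = ρc) :=
  lorenz_hopf_critical_parameter_general σ β hβ h
end
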